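/- Let f be an H-constant n-cochain on A ⋊ H. Then for all 1 ≤ i ≤ n−1: f(a⁰⊗h⁰, …, aⁱ⊗hⁱh, aⁱ⁺¹⊗hⁱ⁺¹, …, aⁿ⊗hⁿ) = f(a⁰⊗h⁰, …, aⁱ⊗hⁱ, h₍₁₎(aⁱ⁺¹)⊗h₍₂₎hⁱ⁺¹, …, aⁿ⊗hⁿ). -/
import Mathlib


noncomputable section

open TensorProduct

variable {H A : Type} [Ring H] [HopfAlgebra ℂ H] [Ring A] [Algebra ℂ A]

/-- `sweedler N Δ₁ Δ₂ k g F` is the Sweedler sum `Σ F (g₍₁₎, …, g₍ₖ₊₁₎)`, computed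
from a chosen finite representation `comul g = Σ_{i < N g} Δ₁ g i ⊗ Δ₂ g i` of the
comultiplication. -/
def sweedler (N : H → ℕ) (Δ₁ Δ₂ : H → ℕ → H) :
    (k : ℕ) → H → ((Fin (k+1) → H) → ℂ) → ℂ
  | 0, g, F => F ![g]
  | k+1, g, F => ∑ i ∈ Finset.range (N g),
      sweedler N Δ₁ Δ₂ k (Δ₂ g i) (fun v => F (Fin.cons (Δ₁ g i) v))

/-- The multiplication of the crossed product `A ⋊ H`, as a linear map on
`(A ⊗ H) ⊗ (A ⊗ H)`; on pure tensors it is `(a ⊗ h)(b ⊗ g) = a h₍₁₎(b) ⊗ h₍₂₎ g`. -/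
def cpMul (ρ : H →ₗ[ℂ] A →ₗ[ℂ] A) :
    (A ⊗[ℂ] H) ⊗[ℂ] (A ⊗[ℂ] H) →ₗ[ℂ] A ⊗[ℂ] H :=
  (LinearMap.rTensor H (LinearMap.mul' ℂ A)) ∘ₗ
  (TensorProduct.assoc ℂ A A H).symm.toLinearMap ∘ₗ
  (LinearMap.lTensor A (TensorProduct.map (TensorProduct.lift ρ) (LinearMap.mul' ℂ H))) ∘ₗ
  (LinearMap.lTensor A (TensorProduct.tensorTensorTensorComm ℂ H H A H).toLinearMap) ∘ₗ
  (LinearMap.lTensor A (LinearMap.rTensor (A ⊗[ℂ] H) (Coalgebra.comul (R := ℂ)))) ∘ₗ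
  (TensorProduct.assoc ℂ A H (A ⊗[ℂ] H)).toLinearMap

/-- The tuple obtained from `x` by replacing the pair `(xʲ, xʲ⁺¹)` by the single
entry `y` (used with `y = xʲ xʲ⁺¹` for the `j`-th face map). -/
def faceTup {α : Type} {n : ℕ} (j : Fin (n+1)) (y : α) (x : Fin (n+2) → α) :
    Fin (n+1) → α :=
  fun k => if (k : ℕ) < (j : ℕ) then x k.castSucc else if k = j then y else x k.succ

/-- The `i`-th term of the product `(p.1 ⊗ p.2)(q.1 ⊗ q.2)` in `A ⋊ H`, for the chosen
representation of the comultiplication: `p.1 · (Δ₁ p.2 i)(q.1) ⊗ (Δ₂ p.2 i) q.2`. -/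
def cpPairTerm (Δ₁ Δ₂ : H → ℕ → H) (ρ : H →ₗ[ℂ] A →ₗ[ℂ] A) (p q : A × H) (i : ℕ) :
    A × H :=
  (p.1 * ρ (Δ₁ p.2 i) q.1, Δ₂ p.2 i * q.2)

/-- The Hochschild coboundary of a cochain on the crossed product `A ⋊ H`. -/
def cpb (ρ : H →ₗ[ℂ] A →ₗ[ℂ] A) {n : ℕ} (f : (Fin (n+1) → A ⊗[ℂ] H) → ℂ) :
    (Fin (n+2) → A ⊗[ℂ] H) → ℂ := fun x =>
  (∑ j : Fin (n+1), (-1 : ℂ) ^ (j : ℕ) *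
      f (faceTup j (cpMul ρ (x j.castSucc ⊗ₜ[ℂ] x j.succ)) x))
  + (-1 : ℂ) ^ (n+1) *
      f (fun k => if (k : ℕ) = 0 then cpMul ρ (x (Fin.last (n+1)) ⊗ₜ[ℂ] x 0)
                  else x k.castSucc)

/-- `f` vanishes whenever some argument in position `≥ 1` lies in the subalgebra
`1 ⊗ H` of `A ⋊ H`. -/
def HConstVanish {m : ℕ} (f : (Fin m → A ⊗[ℂ] H) → ℂ) : Prop :=
  ∀ x : Fin m → A ⊗[ℂ] H,
    (∃ j : Fin m, 0 < (j : ℕ) ∧ ∃ h : H, x j = (1 : A) ⊗ₜ[ℂ] h) → f x = 0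

/-- An `H`-constant cochain on `A ⋊ H`: both `f` and `bf` vanish whenever some
argument in position `≥ 1` lies in `1 ⊗ H`. -/
def IsHConstant (ρ : H →ₗ[ℂ] A →ₗ[ℂ] A) {n : ℕ}
    (f : MultilinearMap ℂ (fun _ : Fin (n+1) => A ⊗[ℂ] H) ℂ) : Prop :=
  HConstVanish ⇑f ∧ HConstVanish (cpb ρ ⇑f)

/-- Auxiliary recursion for `Ψ`: processes the pairs `x¹, …, xᵏ`, keeping an
accumulated Hopf algebra element `g`; at each step `Δg = g₍₁₎ ⊗ g₍₂₎` is split, the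
current slot becomes `g₍₁₎(aʲ)` and the accumulator becomes `g₍₂₎ hʲ`. -/
def psiAux (N : H → ℕ) (Δ₁ Δ₂ : H → ℕ → H) (ρ : H →ₗ[ℂ] A →ₗ[ℂ] A) :
    (k : ℕ) → H → (Fin k → A × H) → (H → (Fin k → A) → ℂ) → ℂ
  | 0, g, _, F => F g ![]
  | k+1, g, x, F => ∑ i ∈ Finset.range (N g),
      psiAux N Δ₁ Δ₂ ρ k (Δ₂ g i * (x 0).2) (fun j => x j.succ)
        (fun h v => F h (Fin.cons (ρ (Δ₁ g i) (x 0).1) v))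

/-- The value of `Ψφ` on the elementary tensors `a⁰ ⊗ h⁰, …, aⁿ ⊗ hⁿ`:
`Ψ(φ)(a⁰⊗h⁰, …, aⁿ⊗hⁿ) = φ(h⁰₍ₙ₊₁₎ ⋯ h^{n-1}₍₂₎ hⁿ, a⁰, h⁰₍₁₎(a¹), …,
h⁰₍ₙ₎⋯h^{n-1}₍₁₎(aⁿ))`. -/
def psiV (N : H → ℕ) (Δ₁ Δ₂ : H → ℕ → H) (ρ : H →ₗ[ℂ] A →ₗ[ℂ] A) {n : ℕ}
    (φf : H → (Fin (n+1) → A) → ℂ) (x : Fin (n+1) → A × H) : ℂ :=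
  psiAux N Δ₁ Δ₂ ρ n ((x 0).2) (fun j => x j.succ)
    (fun h v => φf h (Fin.cons (x 0).1 v))

/-- The equivariance condition `φ(S(g₍₂₎) h g₍₁₎, a⁰, …, aⁿ) =
φ(h, g₍₁₎(a⁰), …, g₍ₙ₊₁₎(aⁿ))` for a cochain `φ : H ⊗ A^{⊗(n+1)} → ℂ`. -/
def IsEquivariant (N : H → ℕ) (Δ₁ Δ₂ : H → ℕ → H) (ρ : H →ₗ[ℂ] A →ₗ[ℂ] A) {n : ℕ}
    (φf : H → (Fin (n+1) → A) → ℂ) : Prop :=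
  ∀ (g h : H) (a : Fin (n+1) → A),
    sweedler N Δ₁ Δ₂ 1 g
      (fun ℓ => φf (HopfAlgebra.antipode (R := ℂ) (ℓ 1) * h * ℓ 0) a)
      = sweedler N Δ₁ Δ₂ n g (fun ℓ => φf h (fun j => ρ (ℓ j) (a j)))

/-- The cyclic operator on equivariant cochains:
`t φ(h, a⁰, …, aⁿ) = φ(h₍₂₎, S⁻¹(h₍₁₎)(aⁿ), a⁰, …, aⁿ⁻¹)`. -/
def cycOpEq (N : H → ℕ) (Δ₁ Δ₂ : H → ℕ → H) (ρ : H →ₗ[ℂ] A →ₗ[ℂ] A)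
    (Sinv : H →ₗ[ℂ] H) {n : ℕ} (φf : H → (Fin (n+1) → A) → ℂ) :
    H → (Fin (n+1) → A) → ℂ := fun h a =>
  sweedler N Δ₁ Δ₂ 1 h (fun ℓ =>
    φf (ℓ 1) (Fin.cons (ρ (Sinv (ℓ 0)) (a (Fin.last n))) (fun j : Fin n => a j.castSucc)))

/-- The map `Φ`: `(Φf)(h, a⁰, …, aⁿ) = f(a⁰ ⊗ 1, …, aⁿ⁻¹ ⊗ 1, aⁿ ⊗ h)`. -/
def phiV {n : ℕ} (f : MultilinearMap ℂ (fun _ : Fin (n+1) => A ⊗[ℂ] H) ℂ) :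
    H → (Fin (n+1) → A) → ℂ := fun h a =>
  f (fun i => if i = Fin.last n then a i ⊗ₜ[ℂ] h else a i ⊗ₜ[ℂ] (1 : H))


-- auxiliary lemmas

theorem cpMul_tmul' (N : H → ℕ) (Δ₁ Δ₂ : H → ℕ → H)
    (hrep : ∀ g : H, (Coalgebra.comul (R := ℂ) g : H ⊗[ℂ] H) =
      ∑ i ∈ Finset.range (N g), Δ₁ g i ⊗ₜ[ℂ] Δ₂ g i)
    (ρ : H →ₗ[ℂ] A →ₗ[ℂ] A) (a b : A) (g h : H) :
    cpMul ρ ((a ⊗ₜ[ℂ] g) ⊗ₜ[ℂ] (b ⊗ₜ[ℂ] h)) =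
      ∑ i ∈ Finset.range (N g), (a * ρ (Δ₁ g i) b) ⊗ₜ[ℂ] (Δ₂ g i * h) := by
  simp only [cpMul, LinearMap.comp_apply, LinearEquiv.coe_coe, TensorProduct.assoc_tmul,
    LinearMap.lTensor_tmul, LinearMap.rTensor_tmul, hrep, TensorProduct.sum_tmul,
    map_sum, TensorProduct.tensorTensorTensorComm_tmul, TensorProduct.map_tmul,
    TensorProduct.lift.tmul, LinearMap.mul'_apply, TensorProduct.tmul_sum,
    TensorProduct.assoc_symm_tmul]

theorem counit_rep' (N : H → ℕ) (Δ₁ Δ₂ : H → ℕ → H)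
    (hrep : ∀ g : H, (Coalgebra.comul (R := ℂ) g : H ⊗[ℂ] H) =
      ∑ i ∈ Finset.range (N g), Δ₁ g i ⊗ₜ[ℂ] Δ₂ g i) (g : H) :
    ∑ i ∈ Finset.range (N g), (Coalgebra.counit (R := ℂ) (Δ₁ g i)) • Δ₂ g i = g := by
  have h1 := Coalgebra.rTensor_counit_comul (R := ℂ) g
  rw [hrep] at h1
  have h2 := congrArg (TensorProduct.lid ℂ H) h1
  simpa [map_sum] using h2

theorem cpMul_one' (N : H → ℕ) (Δ₁ Δ₂ : H → ℕ → H)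
    (hrep : ∀ g : H, (Coalgebra.comul (R := ℂ) g : H ⊗[ℂ] H) =
      ∑ i ∈ Finset.range (N g), Δ₁ g i ⊗ₜ[ℂ] Δ₂ g i)
    (ρ : H →ₗ[ℂ] A →ₗ[ℂ] A)
    (hact_one : ∀ h : H, ρ h 1 = (Coalgebra.counit (R := ℂ) h) • (1 : A))
    (a : A) (g h : H) :
    cpMul ρ ((a ⊗ₜ[ℂ] g) ⊗ₜ[ℂ] ((1:A) ⊗ₜ[ℂ] h)) = a ⊗ₜ[ℂ] (g * h) := by
  rw [cpMul_tmul' N Δ₁ Δ₂ hrep]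
  have key : ∀ i, (a * ρ (Δ₁ g i) 1) ⊗ₜ[ℂ] (Δ₂ g i * h)
      = a ⊗ₜ[ℂ] (((Coalgebra.counit (R := ℂ) (Δ₁ g i)) • Δ₂ g i) * h) := by
    intro i
    rw [hact_one, mul_smul_comm, mul_one, smul_mul_assoc, TensorProduct.tmul_smul,
      TensorProduct.smul_tmul']
  simp_rw [key, ← TensorProduct.tmul_sum, ← Finset.sum_mul]
  rw [counit_rep' N Δ₁ Δ₂ hrep]

theorem faceTup_eq_update {α : Type} {n : ℕ} (j : Fin (n+1)) (y : α) (x : Fin (n+2) → α)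
    (base : Fin (n+1) → α)
    (h1 : ∀ k : Fin (n+1), (k:ℕ) < (j:ℕ) → x k.castSucc = base k)
    (h2 : ∀ k : Fin (n+1), (j:ℕ) < (k:ℕ) → x k.succ = base k) :
    faceTup j y x = Function.update base j y := by
  funext k
  by_cases hk : k = j
  · subst hk; simp [faceTup]
  · have hne : (k:ℕ) ≠ (j:ℕ) := fun hh => hk (Fin.ext hh)
    rw [Function.update_of_ne hk]
    show (if (k:ℕ) < (j:ℕ) then x k.castSucc else if k = j then y else x k.succ) = base k
    rcases hne.lt_or_gt with hc | hc
    · rw [if_pos hc]; exact h1 k hc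
    · rw [if_neg (by omega), if_neg hk]; exact h2 k hc

/-- For an `H`-constant `n`-cochain `f` on `A ⋊ H` and `1 ≤ i ≤ n−1`:
`f(…, aⁱ ⊗ hⁱh, aⁱ⁺¹ ⊗ hⁱ⁺¹, …) = f(…, aⁱ ⊗ hⁱ, h₍₁₎(aⁱ⁺¹) ⊗ h₍₂₎hⁱ⁺¹, …)`. -/
theorem statement13 {n : ℕ}
    (N : H → ℕ) (Δ₁ Δ₂ : H → ℕ → H)
    (hrep : ∀ g : H, (Coalgebra.comul (R := ℂ) g : H ⊗[ℂ] H) =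
      ∑ i ∈ Finset.range (N g), Δ₁ g i ⊗ₜ[ℂ] Δ₂ g i)
    (ρ : H →ₗ[ℂ] A →ₗ[ℂ] A)
    (hρ_one : ρ 1 = LinearMap.id)
    (hρ_mul : ∀ g h : H, ρ (g * h) = ρ g ∘ₗ ρ h)
    (hact_mul : ∀ (h : H) (a b : A),
      ρ h (a * b) = ∑ i ∈ Finset.range (N h), ρ (Δ₁ h i) a * ρ (Δ₂ h i) b)
    (hact_one : ∀ h : H, ρ h 1 = (Coalgebra.counit (R := ℂ) h) • (1 : A))
    (f : MultilinearMap ℂ (fun _ : Fin (n+1) => A ⊗[ℂ] H) ℂ)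
    (hf : IsHConstant ρ f) :
    ∀ (i : ℕ) (hi1 : 1 ≤ i) (hi2 : i < n)
      (a : Fin (n+1) → A) (hs : Fin (n+1) → H) (h : H),
      f (Function.update (fun j => a j ⊗ₜ[ℂ] hs j) ⟨i, by omega⟩
          (a ⟨i, by omega⟩ ⊗ₜ[ℂ] (hs ⟨i, by omega⟩ * h)))
      = ∑ m ∈ Finset.range (N h),
          f (Function.update (fun j => a j ⊗ₜ[ℂ] hs j) ⟨i+1, by omega⟩
              (ρ (Δ₁ h m) (a ⟨i+1, by omega⟩) ⊗ₜ[ℂ] (Δ₂ h m * hs ⟨i+1, by omega⟩))) := by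
  obtain ⟨hfv, hbfv⟩ := hf
  intro i hi1 hi2 a hs h
  have hiL : i < n + 1 := by omega
  have hi1L : i + 1 < n + 1 := by omega
  set base : Fin (n+1) → A ⊗[ℂ] H := fun j => a j ⊗ₜ[ℂ] hs j with hbasedef
  show f (Function.update base ⟨i, hiL⟩ (a ⟨i, hiL⟩ ⊗ₜ[ℂ] (hs ⟨i, hiL⟩ * h)))
      = ∑ m ∈ Finset.range (N h),
          f (Function.update base ⟨i+1, hi1L⟩
              (ρ (Δ₁ h m) (a ⟨i+1, hi1L⟩) ⊗ₜ[ℂ] (Δ₂ h m * hs ⟨i+1, hi1L⟩)))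
  set x : Fin (n+2) → A ⊗[ℂ] H := fun j =>
    if hj : (j:ℕ) ≤ i then base ⟨(j:ℕ), by omega⟩
    else if (j:ℕ) = i+1 then (1:A) ⊗ₜ[ℂ] h
    else base ⟨(j:ℕ)-1, by omega⟩ with hxdef
  have hx_le : ∀ (k : ℕ) (hk' : k < n+2) (hk : k ≤ i), x ⟨k, hk'⟩ = base ⟨k, by omega⟩ := by
    intro k hk' hk
    simp only [hxdef]
    exact dif_pos hk
  have hx_mid : x ⟨i+1, by omega⟩ = (1:A) ⊗ₜ[ℂ] h := by
    simp only [hxdef]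
    exact (dif_neg (by omega)).trans (if_pos trivial)
  have hx_gt : ∀ (k : ℕ) (hk' : k < n+2) (hik : i+1 < k), x ⟨k, hk'⟩ = base ⟨k-1, by omega⟩ := by
    intro k hk' hik
    simp only [hxdef]
    exact (dif_neg (by omega)).trans (if_neg (by omega))
  -- x at castSucc / succ of Fin (n+1) indices
  have hxc : ∀ k : Fin (n+1), (k:ℕ) ≤ i → x k.castSucc = base k := by
    intro k hk
    exact (hx_le (k:ℕ) (Nat.lt_succ_of_lt k.isLt) hk).trans (congrArg base (Fin.eta k k.isLt))
  have hxs : ∀ k : Fin (n+1), i < (k:ℕ) → x k.succ = base k := by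
    intro k hk
    exact (hx_gt ((k:ℕ)+1) (Nat.succ_lt_succ k.isLt) (Nat.succ_lt_succ hk)).trans (congrArg base (Fin.eta k k.isLt))
  -- coboundary vanishes
  have hbf : cpb ρ ⇑f x = 0 :=
    hbfv x ⟨⟨i+1, by omega⟩, Nat.succ_pos i, h, hx_mid⟩
  simp only [cpb] at hbf
  -- the last (cyclic) term vanishes
  have hlast : f (fun k => if (k:ℕ) = 0 then cpMul ρ (x (Fin.last (n+1)) ⊗ₜ[ℂ] x 0)
      else x k.castSucc) = 0 := by
    apply hfv
    refine ⟨⟨i+1, hi1L⟩, Nat.succ_pos i, h, ?_⟩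
    show (if i+1 = 0 then cpMul ρ (x (Fin.last (n+1)) ⊗ₜ[ℂ] x 0)
      else x (⟨i+1, hi1L⟩ : Fin (n+1)).castSucc) = (1:A) ⊗ₜ[ℂ] h
    rw [if_neg (Nat.succ_ne_zero i)]
    exact hx_mid
  -- faces other than i, i+1 vanish
  have hvanish : ∀ k : Fin (n+1), k ≠ ⟨i, hiL⟩ ∧ k ≠ ⟨i+1, hi1L⟩ →
      (-1:ℂ)^(k:ℕ) * f (faceTup k (cpMul ρ (x k.castSucc ⊗ₜ[ℂ] x k.succ)) x) = 0 := by
    rintro k ⟨hk0, hk1⟩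
    have hk0' : (k:ℕ) ≠ i := fun hh => hk0 (Fin.ext hh)
    have hk1' : (k:ℕ) ≠ i+1 := fun hh => hk1 (Fin.ext hh)
    have hz : f (faceTup k (cpMul ρ (x k.castSucc ⊗ₜ[ℂ] x k.succ)) x) = 0 := by
      apply hfv
      rcases Nat.lt_or_ge (k:ℕ) i with hc | hc
      · refine ⟨⟨i, hiL⟩, hi1, h, ?_⟩
        show (if i < (k:ℕ) then x (⟨i, hiL⟩:Fin (n+1)).castSucc
          else if (⟨i, hiL⟩:Fin (n+1)) = k then _ else x (⟨i, hiL⟩:Fin (n+1)).succ) = (1:A) ⊗ₜ[ℂ] h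
        rw [if_neg (by omega), if_neg (fun hh => hk0 hh.symm)]
        exact hx_mid
      · have hc2 : i+1 < (k:ℕ) := by omega
        refine ⟨⟨i+1, hi1L⟩, Nat.succ_pos i, h, ?_⟩
        show (if i+1 < (k:ℕ) then x (⟨i+1, hi1L⟩:Fin (n+1)).castSucc
          else if (⟨i+1, hi1L⟩:Fin (n+1)) = k then _ else x (⟨i+1, hi1L⟩:Fin (n+1)).succ)
          = (1:A) ⊗ₜ[ℂ] h
        rw [if_pos hc2]
        exact hx_mid
    rw [hz, mul_zero]
  -- face i
  have hT0 : faceTup ⟨i, hiL⟩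
      (cpMul ρ (x (⟨i, hiL⟩:Fin (n+1)).castSucc ⊗ₜ[ℂ] x (⟨i, hiL⟩:Fin (n+1)).succ)) x
      = Function.update base ⟨i, hiL⟩ (a ⟨i, hiL⟩ ⊗ₜ[ℂ] (hs ⟨i, hiL⟩ * h)) := by
    have e1 : x (⟨i, hiL⟩:Fin (n+1)).castSucc = a ⟨i, hiL⟩ ⊗ₜ[ℂ] hs ⟨i, hiL⟩ :=
      hxc ⟨i, hiL⟩ le_rfl
    have e2 : x (⟨i, hiL⟩:Fin (n+1)).succ = (1:A) ⊗ₜ[ℂ] h := hx_mid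
    rw [e1, e2, cpMul_one' N Δ₁ Δ₂ hrep ρ hact_one]
    apply faceTup_eq_update
    · intro k hkk; exact hxc k (le_of_lt hkk)
    · intro k hkk; exact hxs k hkk
  -- face i+1
  have hT1 : faceTup ⟨i+1, hi1L⟩
      (cpMul ρ (x (⟨i+1, hi1L⟩:Fin (n+1)).castSucc ⊗ₜ[ℂ] x (⟨i+1, hi1L⟩:Fin (n+1)).succ)) x
      = Function.update base ⟨i+1, hi1L⟩ (∑ m ∈ Finset.range (N h),
          (ρ (Δ₁ h m) (a ⟨i+1, hi1L⟩)) ⊗ₜ[ℂ] (Δ₂ h m * hs ⟨i+1, hi1L⟩)) := by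
    have e1 : x (⟨i+1, hi1L⟩:Fin (n+1)).castSucc = (1:A) ⊗ₜ[ℂ] h := hx_mid
    have e2 : x (⟨i+1, hi1L⟩:Fin (n+1)).succ = a ⟨i+1, hi1L⟩ ⊗ₜ[ℂ] hs ⟨i+1, hi1L⟩ :=
      hxs ⟨i+1, hi1L⟩ (Nat.lt_succ_self i)
    rw [e1, e2, cpMul_tmul' N Δ₁ Δ₂ hrep]
    simp only [one_mul]
    apply faceTup_eq_update
    · intro k hkk; exact hxc k (Nat.lt_succ_iff.mp hkk)
    · intro k hkk; exact hxs k (Nat.lt_of_succ_lt hkk)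
  rw [Fintype.sum_eq_add (⟨i, hiL⟩:Fin (n+1)) ⟨i+1, hi1L⟩ (by simp [Fin.ext_iff])
    hvanish] at hbf
  rw [hT0, hT1, hlast, mul_zero, add_zero, MultilinearMap.map_update_sum] at hbf
  simp only [show ((⟨i, hiL⟩:Fin (n+1)):ℕ) = i from rfl,
    show ((⟨i+1, hi1L⟩:Fin (n+1)):ℕ) = i+1 from rfl, pow_succ] at hbf
  have hpow : ((-1:ℂ)^i) ≠ 0 := pow_ne_zero _ (by norm_num)
  refine mul_left_cancel₀ hpow ?_
  linear_combination hbf
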